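/- arXiv:1410.6210 — 2 statements merged into one kernel-verified Lean document; each statement's English description precedes it below -/
import Mathlib

section
/- Let q be a prime power with q ≡ 3 (mod 4), of characteristic p, let n be an integer with 3 ≤ n ≤ p, and let d_1, …, d_n be divisors of q−1 such that an odd number of the d_i are even. For any multiplicative characters χ_{d_1}, …, χ_{d_n} of 𝔽_q of orders exactly d_1, …, d_n respectively, one has S(χ_{d_n}, …, χ_{d_1}) = −S(χ_{d_1}, …, χ_{d_n}). -/
open Finset

/-- An element `g` of a finite field is primitive if it generates the multiplicative
group of nonzero elements, i.e. every nonzero element is a power of `g`. -/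
def IsPrimitiveElem {F : Type*} [Field F] (g : F) : Prop :=
  ∀ x : F, x ≠ 0 → ∃ k : ℕ, g ^ k = x

/-- The field `F` contains `n` consecutive distinct primitive elements: there is `g`
such that `g, g+1, …, g+n-1` are `n` distinct primitive elements. -/
def HasConsecutivePrimitives (F : Type*) [Field F] (n : ℕ) : Prop :=
  ∃ g : F, (∀ k : ℕ, k < n → IsPrimitiveElem (g + (k : F))) ∧
    ∀ i : ℕ, i < n → ∀ j : ℕ, j < n → g + (i : F) = g + (j : F) → i = j

/-- The character sum `S(χ⁽¹⁾, …, χ⁽ⁿ⁾) = ∑_{g ∈ F} χ⁽¹⁾(g) χ⁽²⁾(g+1) ⋯ χ⁽ⁿ⁾(g+n-1)`,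
where multiplicative characters are extended by `χ(0) = 0`. -/
noncomputable def Schar {F : Type*} [Field F] [Fintype F] {n : ℕ}
    (χ : Fin n → MulChar F ℂ) : ℂ :=
  ∑ g : F, ∏ k : Fin n, χ k (g + ((k : ℕ) : F))

/-!
The substitution `g ↦ -g - (n - 1)` maps `g + (n - 1 - k)` to `-(g + k)`, so reversing the
characters multiplies `S` by `∏ₖ χₖ(-1)`. When `q ≡ 3 (mod 4)`, `(q - 1) / 2` is odd and
`x ^ ((q - 1) / 2) = ±1`; hence a character of even order sends `-1` to `-1`, one of odd order
sends it to `1`, and the product is `(-1)` to the number of even orders.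
-/

namespace MulChar

variable {F : Type*} [Field F] [Fintype F] {R : Type*} [CommRing R] [IsDomain R]

theorem val_neg_one_eq_neg_one_of_even_orderOf (hF : Fintype.card F % 4 = 3)
    (χ : MulChar F R) (he : Even (orderOf χ)) : χ (-1) = -1 := by
  have hchar : ringChar F ≠ 2 := fun h => by
    have := FiniteField.even_card_iff_char_two.mp h
    omega
  have hodd : Odd (Fintype.card F / 2) := Nat.odd_iff.mpr (by omega)
  have hsq : χ (-1) ^ 2 = 1 := by rw [← map_pow, neg_one_sq, map_one]
  refine (sq_eq_one_iff.mp hsq).resolve_left fun hone => ?_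
  have hpow : χ ^ (Fintype.card F / 2) = 1 := by
    ext x
    rw [pow_apply_coe, ← map_pow, one_apply_coe]
    rcases FiniteField.pow_dichotomy hchar x.ne_zero with h | h <;> rw [h]
    exacts [map_one χ, hone]
  exact Nat.not_even_iff_odd.mpr hodd
    (even_iff_two_dvd.mpr (he.two_dvd.trans (orderOf_dvd_of_pow_eq_one hpow)))

theorem val_neg_one_eq_ite_even_orderOf (hF : Fintype.card F % 4 = 3) (χ : MulChar F R) :
    χ (-1) = if Even (orderOf χ) then -1 else 1 := by
  split_ifs with he
  · exact val_neg_one_eq_neg_one_of_even_orderOf hF χ he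
  · exact val_neg_one_eq_one_of_odd_order (Nat.not_even_iff_odd.mp he) (pow_orderOf_eq_one χ)

end MulChar

theorem Fin.cast_val_rev {F : Type*} [Ring F] {n : ℕ} (k : Fin n) :
    ((k.rev : ℕ) : F) = n - 1 - k := by
  rw [Fin.val_rev, Nat.cast_sub k.is_lt]
  push_cast
  abel

theorem Schar_reverse {F : Type*} [Field F] [Fintype F] {n : ℕ} (χ : Fin n → MulChar F ℂ) :
    Schar (fun k => χ k.rev) = (∏ k, χ k (-1)) * Schar χ := by
  rw [Schar, Schar, mul_sum]
  refine Fintype.sum_equiv ((Equiv.neg F).trans (Equiv.subRight ((n : F) - 1))) _ _ fun g => ?_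
  rw [← prod_mul_distrib, ← Equiv.prod_comp Fin.revPerm]
  refine prod_congr rfl fun k _ => ?_
  simp only [Fin.revPerm_apply, Fin.rev_rev, Equiv.trans_apply, Equiv.neg_apply,
    Equiv.subRight_apply, ← map_mul, Fin.cast_val_rev]
  congr 1
  ring

theorem Schar_reverse_neg_general (q n : ℕ) (hq4 : q % 4 = 3)
    (F : Type*) [Field F] [Fintype F] (hF : Fintype.card F = q) (d : Fin n → ℕ)
    (hodd : Odd ((Finset.univ.filter (fun i : Fin n => Even (d i))).card))
    (χ : Fin n → MulChar F ℂ) (hχ : ∀ k, orderOf (χ k) = d k) :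
    Schar (fun k => χ k.rev) = - Schar χ := by
  have hsign : ∏ k, χ k (-1) = -1 := by
    simp only [MulChar.val_neg_one_eq_ite_even_orderOf (hF ▸ hq4), hχ, ← prod_filter,
      prod_const, hodd.neg_one_pow]
  rw [Schar_reverse, hsign, neg_one_mul]

/-- If `q ≡ 3 (mod 4)` and an odd number of the `dᵢ` are even, then
`S(χ_{dₙ}, …, χ_{d₁}) = -S(χ_{d₁}, …, χ_{dₙ})`. -/
theorem Schar_reverse_neg (q p n : ℕ) (hq : IsPrimePow q) (hq4 : q % 4 = 3)
    (F : Type*) [Field F] [Fintype F] (hF : Fintype.card F = q) (hp : CharP F p)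
    (hn3 : 3 ≤ n) (hnp : n ≤ p) (d : Fin n → ℕ) (hd : ∀ k, d k ∣ q - 1)
    (hodd : Odd ((Finset.univ.filter (fun i : Fin n => Even (d i))).card))
    (χ : Fin n → MulChar F ℂ) (hχ : ∀ k, orderOf (χ k) = d k) :
    Schar (fun k => χ k.rev) = - Schar χ :=
  Schar_reverse_neg_general q n hq4 F hF d hodd χ hχ
end

section
/- Let q be a prime power of characteristic p, let n be an integer with 3 ≤ n ≤ p, let e be a divisor of q−1, and let p_1, …, p_s (s ≥ 1) be the distinct primes dividing q−1 but not e. For 1 ≤ i ≤ s and 1 ≤ j, k ≤ n define p_{ijk} = p_i if j = k and p_{ijk} = 1 otherwise. Then N_n(q−1) ≥ (Σ_{j=1}^{n} Σ_{i=1}^{s} N(p_{ij1}e, …, p_{ijn}e)) − (ns − 1) N_n(e). -/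
open Finset

/-- A nonzero element `g` is `e`-free if `g = h ^ d` with `d ∣ e` forces `d = 1`. -/
def EFree {F : Type*} [Field F] (e : ℕ) (g : F) : Prop :=
  g ≠ 0 ∧ ∀ (h : F) (d : ℕ), d ∣ e → g = h ^ d → d = 1

/-- `Ncount F n e` is the number `N(e₁, …, eₙ)` of `g ∈ F` such that `g + k - 1`
is `eₖ`-free for each `k = 1, …, n`. -/
noncomputable def Ncount (F : Type*) [Field F] (n : ℕ) (e : Fin n → ℕ) : ℕ :=
  Nat.card {g : F // ∀ k : Fin n, EFree (e k) (g + ((k : ℕ) : F))}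

/-- `Nn F n e = N(e, …, e)` counts `g ∈ F` with `g, g+1, …, g+n-1` all `e`-free. -/
noncomputable def Nn (F : Type*) [Field F] (n e : ℕ) : ℕ :=
  Ncount F n (fun _ => e)

/-- `θ(m) = ∏_{ℓ ∣ m, ℓ prime} (1 - 1/ℓ)`. -/
noncomputable def theta (m : ℕ) : ℝ :=
  ∏ l ∈ m.primeFactors, (1 - 1 / (l : ℝ))

/-- `W(m) = 2^{ω(m)}`, the number of squarefree divisors of `m`. -/
def W (m : ℕ) : ℕ := 2 ^ m.primeFactors.card

/- The sieve is the first Bonferroni inequality (a union bound on complements) for the sets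
`A_{ij}` of `g` whose shifts are `e`-free and, at the shift `j`, `pᵢe`-free, inside the set of `g`
whose shifts are all `e`-free. A `g` lying in every `A_{ij}` is counted by `N_n(q - 1)`: each shift
is `r`-free for every prime `r ∣ q - 1`, by `e`-freeness if `r ∣ e` and since `r` is some `pᵢ`
otherwise. -/

theorem Finset.sum_card_sub_mul_card_le_card {ι α : Type*} [Fintype ι] [DecidableEq α]
    {S T : Finset α} {A : ι → Finset α} (hA : ∀ i, A i ⊆ S)
    (hT : ∀ g ∈ S, (∀ i, g ∈ A i) → g ∈ T) :
    ∑ i, (#(A i) : ℤ) - (Fintype.card ι - 1) * #S ≤ #T := by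
  have hcover : S \ T ⊆ univ.biUnion fun i => S \ A i := by
    intro g hg
    obtain ⟨hgS, hgT⟩ := mem_sdiff.1 hg
    obtain ⟨i, hi⟩ := not_forall.1 fun h => hgT (hT g hgS h)
    exact mem_biUnion.2 ⟨i, mem_univ _, mem_sdiff.2 ⟨hgS, hi⟩⟩
  have hcompl : ∀ i, (#(S \ A i) : ℤ) = #S - #(A i) := fun i => by
    have := card_sdiff_add_card_eq_card (hA i)
    omega
  have hunion : (#(S \ T) : ℤ) ≤ ∑ i, ((#S : ℤ) - #(A i)) := by
    rw [← sum_congr rfl fun i _ => hcompl i]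
    exact_mod_cast (card_le_card hcover).trans card_biUnion_le
  have hST : (#S : ℤ) - #T ≤ #(S \ T) := by
    have := le_card_sdiff T S
    omega
  rw [sum_sub_distrib, sum_const, card_univ, nsmul_eq_mul] at hunion
  linarith

section Freeness

variable {F : Type*} [Field F]

theorem EFree.of_dvd {a b : ℕ} (hab : a ∣ b) {g : F} (h : EFree b g) : EFree a g :=
  ⟨h.1, fun x d hd => h.2 x d (hd.trans hab)⟩

theorem EFree.of_forall_prime {m : ℕ} {g : F} (hg : g ≠ 0)
    (h : ∀ r, r.Prime → r ∣ m → EFree r g) : EFree m g := by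
  refine ⟨hg, fun x d hd hgx => by_contra fun hd1 => ?_⟩
  obtain ⟨r, hr, hrd⟩ := Nat.exists_prime_and_dvd hd1
  have hgr : g = (x ^ (d / r)) ^ r := by rw [← pow_mul, Nat.div_mul_cancel hrd, hgx]
  exact hr.one_lt.ne' ((h r hr (hrd.trans hd)).2 _ r dvd_rfl hgr)

open scoped Classical in
theorem Ncount_eq_card_filter [Fintype F] (n : ℕ) (e : Fin n → ℕ) :
    Ncount F n e = #{g : F | ∀ k : Fin n, EFree (e k) (g + ((k : ℕ) : F))} := by
  rw [Ncount, Nat.card_eq_fintype_card, Fintype.card_subtype]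

end Freeness

theorem sieve_inequality_general (q n s : ℕ) (F : Type*) [Field F] [Fintype F] (e : ℕ) (p : Fin s → ℕ)
    (hall : ∀ r : ℕ, r.Prime → r ∣ q - 1 → ¬ r ∣ e → ∃ i, p i = r) :
    (∑ j : Fin n, ∑ i : Fin s,
        (Ncount F n (fun k => (if j = k then p i else 1) * e) : ℤ))
      - ((n : ℤ) * s - 1) * (Nn F n e : ℤ) ≤ (Nn F n (q - 1) : ℤ) := by
  classical
  let free (f : Fin n → ℕ) : Finset F := {g | ∀ k : Fin n, EFree (f k) (g + ((k : ℕ) : F))}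
  let A (ji : Fin n × Fin s) := free fun k => (if ji.1 = k then p ji.2 else 1) * e
  have hA : ∀ ji, A ji ⊆ free fun _ => e := fun ji g hg => by
    simp only [A, free, mem_filter, mem_univ, true_and] at hg ⊢
    exact fun k => (hg k).of_dvd (dvd_mul_left e _)
  have hT : ∀ g ∈ free fun _ => e, (∀ ji, g ∈ A ji) → g ∈ free fun _ => q - 1 := by
    simp only [A, free, mem_filter, mem_univ, true_and]
    refine fun g hge hmem k => EFree.of_forall_prime (hge k).1 fun r hr hrq => ?_
    by_cases hre : r ∣ e
    · exact (hge k).of_dvd hre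
    · obtain ⟨i, rfl⟩ := hall r hr hrq hre
      exact (show EFree (p i * e) _ by simpa using hmem (k, i) k).of_dvd (dvd_mul_right _ e)
  have h := sum_card_sub_mul_card_le_card hA hT
  rw [Fintype.sum_prod_type, Fintype.card_prod, Fintype.card_fin, Fintype.card_fin] at h
  simpa [Nn, Ncount_eq_card_filter, A, free] using h

/-- Sieving inequality: if `p₁, …, p_s` (with `s ≥ 1`) are the distinct primes dividing
`q-1` but not `e`, then
`N_n(q-1) ≥ (∑_{j=1}^n ∑_{i=1}^s N(p_{ij1}e, …, p_{ijn}e)) - (ns - 1) N_n(e)`,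
where `p_{ijk} = pᵢ` if `j = k` and `p_{ijk} = 1` otherwise. -/
theorem sieve_inequality (q c n s : ℕ) (hq : IsPrimePow q)
    (F : Type*) [Field F] [Fintype F] (hF : Fintype.card F = q) (hc : CharP F c)
    (hn3 : 3 ≤ n) (hnc : n ≤ c) (e : ℕ) (he : e ∣ q - 1) (hs : 1 ≤ s)
    (p : Fin s → ℕ) (hprime : ∀ i, (p i).Prime) (hdvd : ∀ i, p i ∣ q - 1)
    (hnot : ∀ i, ¬ p i ∣ e) (hinj : Function.Injective p)
    (hall : ∀ r : ℕ, r.Prime → r ∣ q - 1 → ¬ r ∣ e → ∃ i, p i = r) :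
    (∑ j : Fin n, ∑ i : Fin s,
        (Ncount F n (fun k => (if j = k then p i else 1) * e) : ℤ))
      - ((n : ℤ) * s - 1) * (Nn F n e : ℤ) ≤ (Nn F n (q - 1) : ℤ) :=
  sieve_inequality_general q n s F e p hall
end
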